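/- arXiv:1811.00643 — 5 statements merged into one kernel-verified Lean document; each statement's English description precedes it below -/
import Mathlib

section
/- For every invitation set I ⊆ V, the acceptance probability under the threshold friending process equals the probability of success under a random realization: f(I) = E[f(ĝ,I)], i.e., the probability over the thresholds that t ∈ C_∞(I) equals the probability over random realizations ĝ that t ∈ H_∞(ĝ,I). -/
open Finset MeasureTheory

/-- A social network with weights, an initiator `s`, and a target user `t ∉ N_s`. -/
structure FriendNet (V : Type) [Fintype V] [DecidableEq V] where
  G : SimpleGraph V
  adjDec : DecidableRel G.Adj
  w : V → V → ℝ
  w_pos : ∀ u v : V, G.Adj u v → 0 < w u v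
  w_le_one : ∀ u v : V, G.Adj u v → w u v ≤ 1
  w_eq_zero : ∀ u v : V, ¬ G.Adj u v → w u v = 0
  w_sum_le_one : ∀ v : V, ∑ u : V, w u v ≤ 1
  s : V
  t : V
  t_ne_s : t ≠ s
  t_not_friend : ¬ G.Adj s t

variable {V : Type} [Fintype V] [DecidableEq V]

namespace FriendNet

/-- The current friends (neighbors) `N_v` of a user `v`. -/
def Nbr (net : FriendNet V) (v : V) : Finset V :=
  letI := net.adjDec
  Finset.univ.filter fun u => net.G.Adj u v

/-- `Φ(C)`: users not in `C` willing to accept an invitation, given thresholds `θ`. -/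
noncomputable def Phi (net : FriendNet V) (θ : V → ℝ) (C : Finset V) : Finset V :=
  Finset.univ.filter fun u => u ∉ C ∧ θ u ≤ ∑ v ∈ C, net.w v u

/-- One round of the friending process: `C ∪ (Φ(C) ∩ I)`. -/
noncomputable def Cstep (net : FriendNet V) (θ : V → ℝ) (I : Finset V) (C : Finset V) : Finset V :=
  C ∪ (net.Phi θ C ∩ I)

/-- `C_∞(I)`: the final set of the threshold friending process (it stabilizes after
`|V|` rounds). -/
noncomputable def Cinf (net : FriendNet V) (θ : V → ℝ) (I : Finset V) : Finset V :=
  (net.Cstep θ I)^[Fintype.card V] (net.Nbr net.s)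

/-- The distribution of the thresholds: i.i.d. uniform on `[0,1]`. -/
noncomputable def thetaMeasure (V : Type) [Fintype V] : Measure (V → ℝ) :=
  Measure.pi fun _ => volume.restrict (Set.Icc (0 : ℝ) 1)

/-- The acceptance probability `f(I)`: probability over the thresholds that `t ∈ C_∞(I)`. -/
noncomputable def f (net : FriendNet V) (I : Finset V) : ℝ :=
  (thetaMeasure V {θ : V → ℝ | net.t ∈ net.Cinf θ I}).toReal

/-- `p_max`: the maximum acceptance probability over all invitation sets. -/
noncomputable def pmax (net : FriendNet V) : ℝ := ⨆ I : Finset V, net.f I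

/-- A realization: each user selects at most one current friend (`none` plays ℵ0). -/
def IsRealization (net : FriendNet V) (g : V → Option V) : Prop :=
  ∀ v u : V, g v = some u → net.G.Adj u v

/-- `Pr[g]`, the probability of generating the realization `g`. -/
noncomputable def realWeight (net : FriendNet V) (g : V → Option V) : ℝ :=
  ∏ v : V, (g v).elim (1 - ∑ u : V, net.w u v) (fun u => net.w u v)

/-- `Ψ(H)` for a realization `g`. -/
def Psi (g : V → Option V) (H : Finset V) : Finset V :=
  Finset.univ.filter fun v => v ∉ H ∧ ∃ u ∈ H, g v = some u

/-- One round of Process 2: `H ∪ (Ψ(H) ∩ I)`. -/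
def Hstep (g : V → Option V) (I : Finset V) (H : Finset V) : Finset V :=
  H ∪ (Psi g H ∩ I)

/-- `H_∞(g, I)`: the final set of Process 2 (it stabilizes after `|V|` rounds). -/
def Hinf (net : FriendNet V) (g : V → Option V) (I : Finset V) : Finset V :=
  (Hstep g I)^[Fintype.card V] (net.Nbr net.s)

end FriendNet

/-- The loop of Algorithm 1 (backward trace), with fuel. `none` plays ℵ0. -/
def traceAux (g : V → Option V) (Ns : Finset V) : ℕ → V → Finset (Option V) → Finset (Option V)
  | 0, _, acc => acc
  | m + 1, u, acc =>
    match g u with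
    | none => insert none acc
    | some v =>
      if some v ∈ acc then insert none acc
      else if v ∈ Ns then acc
      else traceAux g Ns m v (insert (some v) acc)

namespace FriendNet

/-- The backward trace `t(g)` computed by Algorithm 1. -/
def trace (net : FriendNet V) (g : V → Option V) : Finset (Option V) :=
  traceAux g (net.Nbr net.s) (Fintype.card V + 1) net.t {some net.t}

/-- `f(g, I)`: the indicator that `I` covers `g`, i.e. `t(g) ⊆ I`. -/
noncomputable def fg (net : FriendNet V) (g : V → Option V) (I : Finset V) : ℝ :=
  if net.trace g ⊆ I.image some then 1 else 0

/-- `F(B_l, I) = Σ_{g ∈ B_l} f(g, I)`. -/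
noncomputable def F (net : FriendNet V) {l : ℕ} (B : Fin l → V → Option V)
    (I : Finset V) : ℝ :=
  ∑ i : Fin l, net.fg (B i) I

end FriendNet

instance : MeasurableSpace (V → Option V) := ⊤

/-- The distribution of a random realization `ĝ`. -/
noncomputable def FriendNet.realMeasure (net : FriendNet V) : Measure (V → Option V) :=
  ∑ g : V → Option V, ENNReal.ofReal (net.realWeight g) • Measure.dirac g

open Classical in
/-- `V_max`: users outside `{s} ∪ N_s` lying on some path from `{s} ∪ N_s` to `t`. -/
noncomputable def FriendNet.Vmax (net : FriendNet V) : Finset V :=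
  Finset.univ.filter fun u =>
    u ∉ insert net.s (net.Nbr net.s) ∧
      ∃ v ∈ insert net.s (net.Nbr net.s),
        ∃ p : net.G.Walk v net.t, p.IsPath ∧ u ∈ p.support

/-!
Both processes are cascades in which an invited user `v` joins the current set `C` once a random
trigger of its own fires: `θ v ≤ Σ_{u ∈ C} w(u, v)` for thresholds, `ĝ v ∈ C` for realizations.
Both triggers are monotone in `C` and fire on a given set `S` with the same probability
`Σ_{u ∈ S} w(u, v)`. The event that the cascade follows a given chain `T₀ ⊆ T₁ ⊆ ⋯` is a product
over users of events that depend only on where along the chain the user's trigger first fires,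
and the law of that first index is fixed by the probabilities `Σ_{u ∈ Tᵢ} w(u, v)`. So every
trajectory, and hence reaching `t`, has the same probability in both models.
-/

section HitIndex

open Classical

variable {α : Type*} {n : ℕ}

/-- For an increasing family `A`, the first index `i` with `a ∈ A i` (or `n` if there is none). -/
noncomputable def hitIndex (A : Fin n → Set α) (a : α) : ℕ := #{i | a ∉ A i}

lemma hitIndex_le_card (A : Fin n → Set α) (a : α) : hitIndex A a ≤ n :=
  (card_le_univ _).trans_eq (Fintype.card_fin n)

lemma hitIndex_le_iff {A : Fin n → Set α} (hA : Monotone A) (a : α) (i : Fin n) :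
    hitIndex A a ≤ i ↔ a ∈ A i := by
  constructor
  · intro h
    by_contra ha
    have hIic : Iic i ⊆ ({j | a ∉ A j} : Finset (Fin n)) := fun j hj =>
      mem_filter.2 ⟨mem_univ j, fun haj => ha (hA (mem_Iic.1 hj) haj)⟩
    have : i + 1 ≤ hitIndex A a := Fin.card_Iic i ▸ card_le_card hIic
    omega
  · intro ha
    calc hitIndex A a ≤ #(Iio i) := card_le_card fun j hj =>
          mem_Iio.2 (lt_of_not_ge fun hij => (mem_filter.1 hj).2 (hA hij ha))
      _ = i := Fin.card_Iio i

lemma preimage_hitIndex_Iic {A : Fin n → Set α} (hA : Monotone A) {k : ℕ} (hk : k < n) :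
    hitIndex A ⁻¹' Set.Iic k = A ⟨k, hk⟩ :=
  Set.ext fun a => hitIndex_le_iff hA a ⟨k, hk⟩

lemma preimage_hitIndex_Iic_of_le (A : Fin n → Set α) {k : ℕ} (hk : n ≤ k) :
    hitIndex A ⁻¹' Set.Iic k = Set.univ :=
  Set.eq_univ_of_forall fun a => (hitIndex_le_card A a).trans hk

lemma setOf_pattern_eq_preimage_hitIndex {A : Fin n → Set α} (hA : Monotone A)
    (Φ : (Fin n → Prop) → Prop) :
    {a | Φ fun i => a ∈ A i} = hitIndex A ⁻¹' {k | Φ fun i => k ≤ i} := by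
  ext a
  simp only [Set.mem_ofPred_eq, Set.mem_preimage, hitIndex_le_iff hA]

variable [MeasurableSpace α]

lemma measurable_hitIndex {A : Fin n → Set α} (hA : ∀ i, MeasurableSet (A i)) :
    Measurable (hitIndex A) := by
  rw [show hitIndex A = fun a => ∑ i, if a ∉ A i then 1 else 0 from
    funext fun a => card_filter _ _]
  exact Finset.measurable_sum _ fun i _ => Measurable.ite (hA i).compl measurable_const
    measurable_const

variable {β : Type*} [MeasurableSpace β] {μ : Measure α} {ν : Measure β}
  [IsProbabilityMeasure μ] [IsProbabilityMeasure ν] {A : Fin n → Set α} {B : Fin n → Set β}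

lemma map_hitIndex_eq (hA : Monotone A) (hB : Monotone B) (hAm : ∀ i, MeasurableSet (A i))
    (hBm : ∀ i, MeasurableSet (B i)) (hAB : ∀ i, μ (A i) = ν (B i)) :
    μ.map (hitIndex A) = ν.map (hitIndex B) := by
  refine Measure.ext_of_Iic _ _ fun k => ?_
  rw [Measure.map_apply (measurable_hitIndex hAm) measurableSet_Iic,
    Measure.map_apply (measurable_hitIndex hBm) measurableSet_Iic]
  by_cases hk : k < n
  · rw [preimage_hitIndex_Iic hA hk, preimage_hitIndex_Iic hB hk, hAB]
  · rw [preimage_hitIndex_Iic_of_le A (not_lt.1 hk), preimage_hitIndex_Iic_of_le B (not_lt.1 hk),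
      measure_univ, measure_univ]

theorem measure_setOf_pattern_eq (hA : Monotone A) (hB : Monotone B)
    (hAm : ∀ i, MeasurableSet (A i)) (hBm : ∀ i, MeasurableSet (B i))
    (hAB : ∀ i, μ (A i) = ν (B i)) (Φ : (Fin n → Prop) → Prop) :
    μ {a | Φ fun i => a ∈ A i} = ν {b | Φ fun i => b ∈ B i} := by
  have hK : MeasurableSet {k : ℕ | Φ fun i => k ≤ i} := (Set.to_countable _).measurableSet
  rw [setOf_pattern_eq_preimage_hitIndex hA, setOf_pattern_eq_preimage_hitIndex hB,
    ← Measure.map_apply (measurable_hitIndex hAm) hK,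
    ← Measure.map_apply (measurable_hitIndex hBm) hK, map_hitIndex_eq hA hB hAm hBm hAB]

end HitIndex

namespace Cascade

section Step

variable {ι : Type*} [DecidableEq ι] {α : ι → Type*} (P : ∀ v, α v → Finset ι → Prop)
  (I : Finset ι)

open Classical in
noncomputable def step (x : ∀ v, α v) (C : Finset ι) : Finset ι :=
  C ∪ {v ∈ I | v ∉ C ∧ P v (x v) C}

lemma mem_step {x : ∀ v, α v} {C : Finset ι} {v : ι} :
    v ∈ step P I x C ↔ v ∈ C ∨ (v ∈ I ∧ v ∉ C ∧ P v (x v) C) := by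
  simp [step]

noncomputable def traj (C₀ : Finset ι) (n : ℕ) (x : ∀ v, α v) : Fin (n + 1) → Finset ι :=
  fun i => (step P I x)^[i] C₀

variable {P I} {C₀ : Finset ι} {n : ℕ}

lemma traj_succ (x : ∀ v, α v) (i : Fin n) :
    traj P I C₀ n x i.succ = step P I x (traj P I C₀ n x i.castSucc) := by
  simp only [traj, Fin.val_succ, Fin.val_castSucc, Function.iterate_succ_apply']

lemma monotone_traj (x : ∀ v, α v) : Monotone (traj P I C₀ n x) :=
  Fin.monotone_iff_le_succ.2 fun i => by
    rw [traj_succ]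
    exact subset_union_left

def Consistent (I : Finset ι) (T : Fin (n + 1) → Finset ι) (v : ι) (q : Fin n → Prop) : Prop :=
  ∀ i : Fin n, v ∈ T i.succ ↔ v ∈ T i.castSucc ∨ (v ∈ I ∧ v ∉ T i.castSucc ∧ q i)

lemma traj_eq_iff (x : ∀ v, α v) (T : Fin (n + 1) → Finset ι) :
    traj P I C₀ n x = T ↔
      T 0 = C₀ ∧ ∀ v, Consistent I T v fun i => P v (x v) (T i.castSucc) := by
  constructor
  · rintro rfl
    exact ⟨rfl, fun v i => by rw [traj_succ, mem_step]⟩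
  · rintro ⟨h₀, hT⟩
    funext i
    induction i using Fin.induction with
    | zero => exact h₀.symm
    | succ i ih =>
      ext v
      rw [traj_succ, ih, mem_step, hT v i]

lemma preimage_traj_singleton (T : Fin (n + 1) → Finset ι) :
    traj P I C₀ n ⁻¹' {T} =
      if T 0 = C₀ then Set.univ.pi fun v => {a | Consistent I T v fun i => P v a (T i.castSucc)}
      else ∅ := by
  ext x
  simp only [Set.mem_preimage, Set.mem_singleton_iff, traj_eq_iff]
  split_ifs with h <;> simp [h]

lemma preimage_traj_singleton_of_not_monotone {T : Fin (n + 1) → Finset ι} (hT : ¬Monotone T) :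
    traj P I C₀ n ⁻¹' {T} = ∅ :=
  Set.eq_empty_of_forall_notMem fun x hx => hT (hx ▸ monotone_traj x)

lemma setOf_mem_iterate_eq_preimage_traj [Fintype ι] (t : ι) :
    {x | t ∈ (step P I x)^[n] C₀} =
      traj P I C₀ n ⁻¹' ↑({T | t ∈ T (Fin.last n)} : Finset (Fin (n + 1) → Finset ι)) := by
  ext x
  simp [traj]

end Step

def selectionTrigger {ι : Type*} (_ : ι) (o : Option ι) (H : Finset ι) : Prop :=
  ∃ u ∈ H, o = some u

lemma monotone_selectionTrigger {ι : Type*} (v : ι) (o : Option ι) :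
    Monotone (selectionTrigger v o) :=
  fun _ _ hS ⟨u, hu, ho⟩ => ⟨u, hS hu, ho⟩

section Measure

variable {ι : Type*} {α β : ι → Type*}
  [∀ v, MeasurableSpace (α v)] [∀ v, MeasurableSpace (β v)]
  {μ : ∀ v, Measure (α v)} {ν : ∀ v, Measure (β v)}
  [∀ v, IsProbabilityMeasure (μ v)] [∀ v, IsProbabilityMeasure (ν v)]
  {P : ∀ v, α v → Finset ι → Prop} {Q : ∀ v, β v → Finset ι → Prop} {I C₀ : Finset ι} {n : ℕ}

lemma measure_consistent_eq (hPm : ∀ v S, MeasurableSet {a | P v a S})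
    (hQm : ∀ v S, MeasurableSet {b | Q v b S}) (hP : ∀ v a, Monotone (P v a))
    (hQ : ∀ v b, Monotone (Q v b)) (hPQ : ∀ v S, μ v {a | P v a S} = ν v {b | Q v b S})
    {T : Fin (n + 1) → Finset ι} (hT : Monotone T) (v : ι) :
    μ v {a | Consistent I T v fun i => P v a (T i.castSucc)} =
      ν v {b | Consistent I T v fun i => Q v b (T i.castSucc)} :=
  measure_setOf_pattern_eq (A := fun i => {a | P v a (T i.castSucc)})
    (B := fun i => {b | Q v b (T i.castSucc)})
    (fun _ _ hij _ ha => hP v _ (hT (Fin.castSucc_le_castSucc_iff.2 hij)) ha)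
    (fun _ _ hij _ hb => hQ v _ (hT (Fin.castSucc_le_castSucc_iff.2 hij)) hb)
    (fun _ => hPm v _) (fun _ => hQm v _) (fun _ => hPQ v _) (Consistent I T v)

variable [Fintype ι] [DecidableEq ι]

lemma measurableSet_preimage_traj_singleton (hPm : ∀ v S, MeasurableSet {a | P v a S})
    (T : Fin (n + 1) → Finset ι) : MeasurableSet (traj P I C₀ n ⁻¹' {T}) := by
  rw [preimage_traj_singleton]
  split_ifs
  · refine MeasurableSet.univ_pi fun v =>
      measurableSet_setOfPred.2 <| Measurable.forall fun i => ?_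
    exact measurable_const.iff <| measurable_const.or <| measurable_const.and <|
      measurable_const.and <| measurableSet_setOfPred.1 (hPm v _)
  · exact MeasurableSet.empty

lemma measure_preimage_traj_singleton_eq (hPm : ∀ v S, MeasurableSet {a | P v a S})
    (hQm : ∀ v S, MeasurableSet {b | Q v b S}) (hP : ∀ v a, Monotone (P v a))
    (hQ : ∀ v b, Monotone (Q v b)) (hPQ : ∀ v S, μ v {a | P v a S} = ν v {b | Q v b S})
    (T : Fin (n + 1) → Finset ι) :
    Measure.pi μ (traj P I C₀ n ⁻¹' {T}) = Measure.pi ν (traj Q I C₀ n ⁻¹' {T}) := by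
  by_cases hT : Monotone T
  · rw [preimage_traj_singleton, preimage_traj_singleton]
    split_ifs
    · simp only [Measure.pi_pi]
      exact prod_congr rfl fun v _ => measure_consistent_eq hPm hQm hP hQ hPQ hT v
    · simp
  · rw [preimage_traj_singleton_of_not_monotone hT, preimage_traj_singleton_of_not_monotone hT,
      measure_empty, measure_empty]

theorem measure_pi_mem_iterate_eq (hPm : ∀ v S, MeasurableSet {a | P v a S})
    (hQm : ∀ v S, MeasurableSet {b | Q v b S}) (hP : ∀ v a, Monotone (P v a))
    (hQ : ∀ v b, Monotone (Q v b)) (hPQ : ∀ v S, μ v {a | P v a S} = ν v {b | Q v b S})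
    (t : ι) :
    Measure.pi μ {x | t ∈ (step P I x)^[n] C₀} =
      Measure.pi ν {y | t ∈ (step Q I y)^[n] C₀} := by
  rw [setOf_mem_iterate_eq_preimage_traj, setOf_mem_iterate_eq_preimage_traj,
    ← sum_measure_preimage_singleton _ fun T _ => measurableSet_preimage_traj_singleton hPm T,
    ← sum_measure_preimage_singleton _ fun T _ => measurableSet_preimage_traj_singleton hQm T]
  exact sum_congr rfl fun T _ => measure_preimage_traj_singleton_eq hPm hQm hP hQ hPQ T

end Measure

end Cascade

namespace FriendNet

variable (net : FriendNet V)

lemma w_nonneg (u v : V) : 0 ≤ net.w u v := by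
  by_cases h : net.G.Adj u v
  · exact (net.w_pos u v h).le
  · rw [net.w_eq_zero u v h]

lemma sum_w_le_one (S : Finset V) (v : V) : ∑ u ∈ S, net.w u v ≤ 1 :=
  (sum_le_sum_of_subset_of_nonneg (subset_univ S) fun u _ _ => net.w_nonneg u v).trans
    (net.w_sum_le_one v)

def thresholdTrigger (v : V) (θ : ℝ) (C : Finset V) : Prop := θ ≤ ∑ u ∈ C, net.w u v

lemma Cstep_eq_step (θ : V → ℝ) (I : Finset V) :
    net.Cstep θ I = Cascade.step net.thresholdTrigger I θ := by
  ext C v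
  simp only [Cstep, Phi, thresholdTrigger, Cascade.mem_step, mem_union, mem_inter, mem_filter,
    mem_univ, true_and]
  tauto

lemma Hstep_eq_step (g : V → Option V) (I : Finset V) :
    Hstep g I = Cascade.step Cascade.selectionTrigger I g := by
  ext H v
  simp only [Hstep, Psi, Cascade.selectionTrigger, Cascade.mem_step, mem_union, mem_inter,
    mem_filter, mem_univ, true_and]
  tauto

lemma monotone_thresholdTrigger (v : V) (θ : ℝ) : Monotone (net.thresholdTrigger v θ) :=
  fun _ _ hS hθ => hθ.trans (sum_le_sum_of_subset_of_nonneg hS fun u _ _ => net.w_nonneg u v)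

instance : IsProbabilityMeasure (volume.restrict (Set.Icc (0 : ℝ) 1)) := ⟨by simp⟩

lemma volume_restrict_setOf_thresholdTrigger (v : V) (S : Finset V) :
    volume.restrict (Set.Icc (0 : ℝ) 1) {θ | net.thresholdTrigger v θ S} =
      ENNReal.ofReal (∑ u ∈ S, net.w u v) := by
  have hS : Set.Iic (∑ u ∈ S, net.w u v) ∩ Set.Icc 0 1 = Set.Icc 0 (∑ u ∈ S, net.w u v) := by
    have := net.sum_w_le_one S v
    ext x
    simp only [Set.mem_inter_iff, Set.mem_Iic, Set.mem_Icc]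
    grind
  change volume.restrict _ (Set.Iic _) = _
  rw [Measure.restrict_apply measurableSet_Iic, hS, Real.volume_Icc, sub_zero]

noncomputable def selectionWeight (v : V) (o : Option V) : ℝ :=
  o.elim (1 - ∑ u, net.w u v) fun u => net.w u v

lemma selectionWeight_nonneg (v : V) (o : Option V) : 0 ≤ net.selectionWeight v o := by
  cases o with
  | none => exact sub_nonneg.2 (net.w_sum_le_one v)
  | some u => exact net.w_nonneg u v

instance : MeasurableSpace (Option V) := ⊤

/-- The law of `ĝ v`. -/
noncomputable def selectionLaw (v : V) : Measure (Option V) :=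
  ∑ o, ENNReal.ofReal (net.selectionWeight v o) • Measure.dirac o

lemma selectionLaw_apply (v : V) (s : Set (Option V)) :
    net.selectionLaw v s =
      ∑ o, s.indicator (fun o => ENNReal.ofReal (net.selectionWeight v o)) o := by
  simp only [selectionLaw, Measure.coe_finsetSum, Finset.sum_apply, Measure.smul_apply,
    Measure.dirac_apply, smul_eq_mul]
  refine sum_congr rfl fun o _ => ?_
  by_cases h : o ∈ s <;> simp [h]

lemma sum_selectionWeight (v : V) : ∑ o, net.selectionWeight v o = 1 := by
  simp [Fintype.sum_option, selectionWeight]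

instance (v : V) : IsProbabilityMeasure (net.selectionLaw v) := by
  constructor
  rw [selectionLaw_apply, ← ENNReal.ofReal_one, ← net.sum_selectionWeight v,
    ENNReal.ofReal_sum_of_nonneg fun o _ => net.selectionWeight_nonneg v o]
  simp

lemma selectionLaw_singleton (v : V) (o : Option V) :
    net.selectionLaw v {o} = ENNReal.ofReal (net.selectionWeight v o) := by
  rw [selectionLaw_apply, Fintype.sum_eq_single o fun o' ho' => by simp [ho'],
    Set.indicator_of_mem (Set.mem_singleton o)]

lemma selectionLaw_setOf_selectionTrigger (v : V) (S : Finset V) :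
    net.selectionLaw v {o | Cascade.selectionTrigger v o S} =
      ENNReal.ofReal (∑ u ∈ S, net.w u v) := by
  rw [selectionLaw_apply, Fintype.sum_option,
    Set.indicator_of_notMem (by simp [Cascade.selectionTrigger]), zero_add,
    ENNReal.ofReal_sum_of_nonneg fun u _ => net.w_nonneg u v, ← univ_inter S, ← sum_ite_mem]
  exact sum_congr rfl fun u _ => by
    simp [Set.indicator_apply, Cascade.selectionTrigger, selectionWeight]

lemma toReal_pi_selectionLaw (p : (V → Option V) → Prop) [DecidablePred p] :
    (Measure.pi net.selectionLaw {g | p g}).toReal =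
      ∑ g, net.realWeight g * if p g then 1 else 0 := by
  have hweight : ∀ g, (Measure.pi net.selectionLaw {g}).toReal = net.realWeight g := fun g => by
    rw [Measure.pi_singleton, ENNReal.toReal_prod]
    simp only [selectionLaw_singleton,
      ENNReal.toReal_ofReal (net.selectionWeight_nonneg _ _)]
    rfl
  rw [← Set.coe_toFinset {g | p g}, ← sum_measure_singleton,
    ENNReal.toReal_sum fun g _ => measure_ne_top (Measure.pi net.selectionLaw) {g}]
  simp only [hweight, mul_ite, mul_one, mul_zero, ← sum_filter]
  congr 1
  ext
  simp

end FriendNet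

/-- Lemma 1: for every invitation set `I ⊆ V`, the acceptance
probability over the thresholds that `t ∈ C_∞(I)` equals the probability, over a random
realization `ĝ`, that `t ∈ H_∞(ĝ, I)`, i.e. `f(I) = E[f(ĝ, I)]`. -/
theorem acceptance_prob_eq_expected_realization (net : FriendNet V) (I : Finset V) :
    net.f I =
      ∑ g : V → Option V,
        net.realWeight g * (if net.t ∈ net.Hinf g I then (1 : ℝ) else 0) := by
  have hcascade :
      Measure.pi (fun _ => volume.restrict (Set.Icc (0 : ℝ) 1))
          {θ | net.t ∈ (Cascade.step net.thresholdTrigger I θ)^[Fintype.card V] (net.Nbr net.s)} =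
        Measure.pi net.selectionLaw
          {g | net.t ∈
            (Cascade.step Cascade.selectionTrigger I g)^[Fintype.card V] (net.Nbr net.s)} :=
    Cascade.measure_pi_mem_iterate_eq (P := net.thresholdTrigger) (fun _ _ => measurableSet_Iic)
      (fun _ _ => MeasurableSpace.measurableSet_top) net.monotone_thresholdTrigger
      Cascade.monotone_selectionTrigger
      (fun v S => by
        rw [net.volume_restrict_setOf_thresholdTrigger, net.selectionLaw_setOf_selectionTrigger])
      net.t
  rw [← net.toReal_pi_selectionLaw fun g => net.t ∈ net.Hinf g I]
  simp only [FriendNet.f, FriendNet.thetaMeasure, FriendNet.Cinf, FriendNet.Hinf,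
    net.Cstep_eq_step, FriendNet.Hstep_eq_step, hcascade]
end

section
/- For every realization g and every invitation set I ⊆ V, the target t belongs to H_∞(g,I) (i.e., t can become a friend of s in realization g under the invitation set I) if and only if I covers g, that is, t(g) ⊆ I. -/
open Finset MeasureTheory

variable {V : Type} [Fintype V] [DecidableEq V]

/-!
A user `v` joins Process 2 within `n` rounds exactly when following the choices
`v, g v, g (g v), …` leads into `N_s` within `n` steps and every user met before `N_s` is
invited. The backward trace walks along this same chain; it records `ℵ0` exactly when the
chain breaks off (a user who chooses no one) or closes a cycle before reaching `N_s`, and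
otherwise it consists of the users met before `N_s`. Since a cycle-free chain visits at most
`|V|` users, the `|V|` rounds of Process 2 and the fuel of the trace both suffice.
-/

def ReachesWithin {α : Type*} (g : α → Option α) (Ns I : Finset α) : ℕ → α → Prop
  | 0, v => v ∈ Ns
  | n + 1, v => v ∈ Ns ∨ (v ∈ I ∧ ∃ w, g v = some w ∧ ReachesWithin g Ns I n w)

namespace ReachesWithin

variable {α : Type*} {g : α → Option α} {Ns I : Finset α} {v : α}

lemma of_mem (h : v ∈ Ns) : ∀ n, ReachesWithin g Ns I n v
  | 0 => h
  | _ + 1 => Or.inl h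

lemma succ : ∀ {n : ℕ} {v : α}, ReachesWithin g Ns I n v → ReachesWithin g Ns I (n + 1) v
  | 0, _, h => Or.inl h
  | _ + 1, _, Or.inl h => Or.inl h
  | _ + 1, _, Or.inr ⟨hI, w, hw, h⟩ => Or.inr ⟨hI, w, hw, h.succ⟩

lemma mem_of_notMem {n : ℕ} (h : ReachesWithin g Ns I n v) (hv : v ∉ Ns) : v ∈ I := by
  cases n with
  | zero => exact absurd h hv
  | succ n => exact h.resolve_left hv |>.1

lemma exists_minimal {n : ℕ} (h : ReachesWithin g Ns I n v) (hv : v ∉ Ns) :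
    ∃ k < n, ReachesWithin g Ns I (k + 1) v ∧ ¬ ReachesWithin g Ns I k v := by
  classical
  have hex : ∃ m, ReachesWithin g Ns I m v := ⟨n, h⟩
  have hle : Nat.find hex ≤ n := Nat.find_min' hex h
  obtain ⟨k, hk⟩ : ∃ k, Nat.find hex = k + 1 := by
    refine Nat.exists_eq_succ_of_ne_zero fun h0 => hv ?_
    simpa [h0, ReachesWithin] using Nat.find_spec hex
  exact ⟨k, by omega, hk ▸ Nat.find_spec hex, Nat.find_min hex (by omega)⟩

end ReachesWithin

lemma FriendNet.mem_iterate_Hstep_iff {g : V → Option V} {Ns I : Finset V} (n : ℕ) (v : V) :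
    v ∈ (FriendNet.Hstep g I)^[n] Ns ↔ ReachesWithin g Ns I n v := by
  induction n generalizing v with
  | zero => rfl
  | succ n ih =>
    rw [Function.iterate_succ_apply']
    simp only [FriendNet.Hstep, FriendNet.Psi, mem_union, mem_inter, mem_filter, mem_univ,
      true_and]
    constructor
    · rintro (h | ⟨⟨-, u, hu, hgu⟩, hvI⟩)
      · exact ((ih v).1 h).succ
      · exact Or.inr ⟨hvI, u, hgu, (ih u).1 hu⟩
    · rintro (h | ⟨hvI, w, hw, h⟩)
      · exact Or.inl ((ih v).2 (.of_mem h n))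
      · by_cases hv : v ∈ (FriendNet.Hstep g I)^[n] Ns
        · exact Or.inl hv
        · exact Or.inr ⟨⟨hv, w, (ih w).2 h, hw⟩, hvI⟩

section traceAux

variable {α : Type} [DecidableEq α] {g : α → Option α} {Ns I : Finset α}

lemma subset_traceAux (m : ℕ) (u : α) (acc : Finset (Option α)) :
    acc ⊆ traceAux g Ns m u acc := by
  induction m generalizing u acc with
  | zero => exact subset_rfl
  | succ m ih =>
    rw [traceAux]
    split
    · exact subset_insert _ _
    · split_ifs
      · exact subset_insert _ _
      · exact subset_rfl
      · exact (subset_insert _ _).trans (ih _ _)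

lemma card_le_of_subset_image_some [Fintype α] {acc : Finset (Option α)}
    (h : acc ⊆ I.image some) :
    acc.card ≤ Fintype.card α :=
  (card_le_card h).trans (card_image_le.trans (card_le_univ I))

/-- `k` bounds the steps left before the trace, a subset of `some '' I`, would outgrow `α`. -/
lemma reachesWithin_of_traceAux_subset [Fintype α] (k : ℕ) :
    ∀ (m : ℕ) (u : α) (acc : Finset (Option α)), some u ∈ acc →
      Fintype.card α < acc.card + k → k ≤ m →
      traceAux g Ns m u acc ⊆ I.image some → ReachesWithin g Ns I k u := by
  induction k with
  | zero =>
    intro m u acc _ hcard _ hsub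
    have := card_le_of_subset_image_some ((subset_traceAux m u acc).trans hsub)
    omega
  | succ k ih =>
    rintro (_ | m) u acc hu hcard hkm hsub
    · omega
    have huI : u ∈ I := by
      simpa using hsub (subset_traceAux _ u acc hu)
    have none_notMem : none ∉ I.image some := by simp
    rw [traceAux] at hsub
    split at hsub
    next => exact absurd (hsub (mem_insert_self _ _)) none_notMem
    next w hw =>
      split_ifs at hsub with hwacc hwNs
      · exact absurd (hsub (mem_insert_self _ _)) none_notMem
      · exact Or.inr ⟨huI, w, hw, .of_mem hwNs k⟩
      · refine Or.inr ⟨huI, w, hw, ih m w _ (mem_insert_self _ _) ?_ (by omega) hsub⟩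
        rw [card_insert_of_notMem hwacc]
        omega

/-- Along a chain of exact reaching time `n + 1` no user of the trace is met again, since
every user of the trace needs more than `n` steps. -/
lemma traceAux_subset_of_reachesWithin (m : ℕ) :
    ∀ (n : ℕ) (u : α) (acc : Finset (Option α)), n < m →
      ReachesWithin g Ns I (n + 1) u → ¬ ReachesWithin g Ns I n u →
      (∀ x, some x ∈ acc → ¬ ReachesWithin g Ns I n x) → acc ⊆ I.image some →
      traceAux g Ns m u acc ⊆ I.image some := by
  induction m with
  | zero => intros; omega
  | succ m ih =>
    intro n u acc hnm hreach hmin hacc hsub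
    obtain ⟨-, w, hw, hwreach⟩ := hreach.resolve_left fun h => hmin (.of_mem h n)
    have hwacc : some w ∉ acc := fun h => hacc w h hwreach
    rw [traceAux, hw]
    simp only [hwacc, if_false]
    split_ifs with hwNs
    · exact hsub
    cases n with
    | zero => exact absurd hwreach hwNs
    | succ n =>
      have hwmin : ¬ ReachesWithin g Ns I n w := fun h =>
        hmin (Or.inr ⟨hreach.mem_of_notMem fun h' => hmin (.of_mem h' _), w, hw, h⟩)
      refine ih n w _ (by omega) hwreach hwmin ?_ ?_
      · simp only [mem_insert, Option.some_inj]
        rintro x (rfl | hx)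
        · exact hwmin
        · exact fun h => hacc x hx h.succ
      · exact insert_subset (mem_image_of_mem _ (hwreach.mem_of_notMem hwNs)) hsub

end traceAux

theorem target_friended_iff_covers_general (net : FriendNet V) (g : V → Option V)
    (I : Finset V) :
    net.t ∈ net.Hinf g I ↔ net.trace g ⊆ I.image some := by
  have hNt : net.t ∉ net.Nbr net.s := by
    simpa [FriendNet.Nbr] using fun h => net.t_not_friend (net.G.adj_symm h)
  rw [FriendNet.Hinf, FriendNet.trace, FriendNet.mem_iterate_Hstep_iff]
  constructor
  · intro h
    obtain ⟨k, hk, hreach, hmin⟩ := h.exists_minimal hNt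
    refine traceAux_subset_of_reachesWithin _ k _ _ (by omega) hreach hmin ?_ ?_
    · simpa using hmin
    · simpa using h.mem_of_notMem hNt
  · exact reachesWithin_of_traceAux_subset _ _ _ _ (mem_singleton_self _) (by simp) (by omega)

/-- Lemma 2: for every realization `g` and every invitation set
`I ⊆ V`, `t ∈ H_∞(g, I)` if and only if `I` covers `g`, i.e. `t(g) ⊆ I`. -/
theorem target_friended_iff_covers (net : FriendNet V) (g : V → Option V)
    (hg : net.IsRealization g) (I : Finset V) :
    net.t ∈ net.Hinf g I ↔ net.trace g ⊆ I.image some :=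
  target_friended_iff_covers_general net g I
end

section
/- For every realization g, t ∈ H_∞(g,V) (i.e., t can become a friend of s in g even when all users are invited) if and only if g is a type-1 realization, that is, ℵ0 ∉ t(g). -/
open Finset MeasureTheory

variable {V : Type} [Fintype V] [DecidableEq V]

/-! Both sides say that the chain of selections `t, g t, g (g t), …` reaches `N_s`. With everyone
invited, a user enters `H` as soon as the friend it selected is in `H`, and the process only grows,
so after `|V|` rounds it is a fixed point: `H_∞(g, V)` is `N_s` together with every user whose
chain reaches `N_s`. The backward trace walks the same chain and adds `ℵ0` when the chain stops or
closes a cycle; in the second case the visited users are closed under `g` and avoid `N_s`, so the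
chain never reaches `N_s`. -/

theorem Finset.isFixedPt_iterate_card {α : Type*} [Fintype α] {F : Finset α → Finset α}
    (hF : ∀ s, s ⊆ F s) (s : Finset α) : Function.IsFixedPt F (F^[Fintype.card α] s) := by
  have hsucc (m : ℕ) : F^[m + 1] s = F (F^[m] s) := Function.iterate_succ_apply' F m s
  have heq_of_card (m : ℕ) (h : #(F^[m] s) = #(F^[m + 1] s)) : F^[m + 1] s = F^[m] s :=
    (eq_of_subset_of_card_le (hsucc m ▸ hF _) h.ge).symm
  have hmono : Monotone fun m => #(F^[m] s) :=
    monotone_nat_of_le_succ fun m => card_le_card (hsucc m ▸ hF _)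
  have hstab := Nat.stabilises_of_monotone hmono (fun _ => card_le_univ _)
    (fun m h => by rw [hsucc (m + 1), heq_of_card m h, ← hsucc, h]) (Nat.le_succ _)
  rw [Function.IsFixedPt, ← hsucc, heq_of_card _ hstab.symm]

inductive Reaches {α : Type*} (g : α → Option α) (S : Set α) : α → Prop
  | head {v w : α} : g v = some w → w ∈ S → Reaches g S v
  | cons {v w : α} : g v = some w → Reaches g S w → Reaches g S v

section Reaches

variable {α : Type*} {g : α → Option α} {S : Set α}

theorem not_reaches_of_eq_none {v : α} (hv : g v = none) : ¬ Reaches g S v := by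
  rintro (⟨hw, -⟩ | ⟨hw, -⟩) <;> simp_all

theorem reaches_iff_of_eq_some {v w : α} (hv : g v = some w) :
    Reaches g S v ↔ w ∈ S ∨ Reaches g S w := by
  refine ⟨?_, fun h => h.elim (Reaches.head hv) (Reaches.cons hv)⟩
  rintro (⟨hw', hS⟩ | ⟨hw', hR⟩) <;> rw [hv, Option.some_inj] at hw' <;> subst hw'
  exacts [Or.inl hS, Or.inr hR]

theorem not_reaches_of_closed {T : Set α} (hT : ∀ x ∈ T, ∃ y ∈ T, g x = some y)
    (hTS : ∀ x ∈ T, x ∉ S) {v : α} (hv : v ∈ T) : ¬ Reaches g S v := by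
  intro h
  induction h with
  | head hw hS =>
    obtain ⟨y, hy, hgy⟩ := hT _ hv
    rw [hw, Option.some_inj] at hgy
    exact hTS _ (hgy ▸ hy) hS
  | cons hw _ ih =>
    obtain ⟨y, hy, hgy⟩ := hT _ hv
    rw [hw, Option.some_inj] at hgy
    exact ih (hgy ▸ hy)

end Reaches

namespace FriendNet

variable (g : V → Option V)

theorem mem_Hstep_univ {H : Finset V} {v : V} :
    v ∈ Hstep g univ H ↔ v ∈ H ∨ ∃ w ∈ H, g v = some w := by
  simp only [Hstep, Psi, mem_union, mem_inter, mem_filter, mem_univ, true_and, and_true]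
  tauto

theorem mem_or_reaches_of_mem_iterate_Hstep_univ {H₀ : Finset V} {n : ℕ} {v : V}
    (hv : v ∈ (Hstep g univ)^[n] H₀) : v ∈ H₀ ∨ Reaches g H₀ v := by
  induction n generalizing v with
  | zero => exact Or.inl hv
  | succ n ih =>
    rw [Function.iterate_succ_apply', mem_Hstep_univ] at hv
    obtain hv | ⟨w, hw, hgv⟩ := hv
    · exact ih hv
    · exact Or.inr ((reaches_iff_of_eq_some hgv).2 (ih hw))

theorem mem_of_reaches_of_isFixedPt {H₀ H : Finset V} (hH : Function.IsFixedPt (Hstep g univ) H)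
    (hH₀ : H₀ ⊆ H) {v : V} (hv : Reaches g H₀ v) : v ∈ H := by
  rw [← hH, mem_Hstep_univ]
  induction hv with
  | head hw hS => exact Or.inr ⟨_, hH₀ hS, hw⟩
  | cons hw _ ih => exact Or.inr ⟨_, hH ▸ (mem_Hstep_univ g).2 ih, hw⟩

theorem mem_iterate_card_Hstep_univ_iff (H₀ : Finset V) (v : V) :
    v ∈ (Hstep g univ)^[Fintype.card V] H₀ ↔ v ∈ H₀ ∨ Reaches g H₀ v := by
  have hinfl : ∀ H, H ⊆ Hstep g univ H := fun _ => subset_union_left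
  refine ⟨mem_or_reaches_of_mem_iterate_Hstep_univ g, ?_⟩
  rintro (hv | hv)
  · exact Function.id_le_iterate_of_id_le hinfl _ _ hv
  · exact mem_of_reaches_of_isFixedPt g (Finset.isFixedPt_iterate_card hinfl H₀)
      (Function.id_le_iterate_of_id_le hinfl _ _) hv

end FriendNet

theorem card_le_of_none_notMem {α : Type*} [Fintype α] {s : Finset (Option α)}
    (h : none ∉ s) : #s ≤ Fintype.card α := by
  have := Finset.card_lt_univ_of_notMem h
  rw [Fintype.card_option] at this
  omega

theorem none_notMem_traceAux_iff {g : V → Option V} {Ns : Finset V} {m : ℕ} {u : V}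
    {acc : Finset (Option V)} (hu : some u ∈ acc) (hnone : none ∉ acc)
    (hNs : ∀ x ∈ Ns, some x ∉ acc)
    (hclosed : ∀ x, some x ∈ acc → x ≠ u → g x ∈ acc)
    (hfuel : Fintype.card V < #acc + m) :
    none ∉ traceAux g Ns m u acc ↔ Reaches g Ns u := by
  induction m generalizing u acc with
  | zero => exact absurd hfuel (by have := card_le_of_none_notMem hnone; omega)
  | succ m ih =>
    cases hgu : g u with
    | none =>
      simp only [traceAux, hgu, mem_insert_self, not_true_eq_false, false_iff]
      exact not_reaches_of_eq_none hgu
    | some v =>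
      by_cases hv : some v ∈ acc
      · simp only [traceAux, hgu, if_pos hv, mem_insert_self, not_true_eq_false, false_iff]
        refine not_reaches_of_closed (T := {x | some x ∈ acc}) (fun x hx => ?_)
          (fun x hx hxNs => hNs x hxNs hx) hu
        by_cases hxu : x = u
        · subst hxu
          exact ⟨v, hv, hgu⟩
        · have hgx := hclosed x hx hxu
          obtain ⟨y, hy⟩ := Option.ne_none_iff_exists'.1 (ne_of_mem_of_not_mem hgx hnone)
          exact ⟨y, show some y ∈ acc from hy ▸ hgx, hy⟩
      by_cases hvNs : v ∈ Ns
      · simp only [traceAux, hgu, if_neg hv, if_pos hvNs]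
        exact iff_of_true hnone (Reaches.head hgu hvNs)
      simp only [traceAux, hgu, if_neg hv, if_neg hvNs]
      rw [reaches_iff_of_eq_some hgu, mem_coe, or_iff_right hvNs]
      refine ih (mem_insert_self _ _) (by simp [hnone]) (fun x hx => ?_) (fun x hx hxv => ?_)
        (by rw [card_insert_of_notMem hv]; omega)
      · rw [mem_insert, Option.some_inj]
        rintro (rfl | hxacc)
        exacts [hvNs hx, hNs x hx hxacc]
      · rw [mem_insert, Option.some_inj, or_iff_right hxv] at hx
        by_cases hxu : x = u
        · exact hxu ▸ hgu ▸ mem_insert_self _ _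
        · exact mem_insert_of_mem (hclosed x hx hxu)

namespace FriendNet

theorem t_notMem_Nbr_s (net : FriendNet V) : net.t ∉ net.Nbr net.s := by
  simpa [Nbr] using fun h => net.t_not_friend h.symm

theorem none_notMem_trace_iff (net : FriendNet V) (g : V → Option V) :
    none ∉ net.trace g ↔ Reaches g (net.Nbr net.s) net.t := by
  refine none_notMem_traceAux_iff (mem_singleton_self _) (by simp) (fun x hx h => ?_)
    (fun x hx hxt => absurd (Option.some_inj.1 (mem_singleton.1 hx)) hxt)
    (by rw [card_singleton]; omega)
  rw [mem_singleton, Option.some_inj] at h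
  exact net.t_notMem_Nbr_s (h ▸ hx)

end FriendNet

theorem friended_with_all_invited_iff_type_one_general (net : FriendNet V) (g : V → Option V) :
    net.t ∈ net.Hinf g Finset.univ ↔ (none : Option V) ∉ net.trace g := by
  rw [FriendNet.Hinf, FriendNet.mem_iterate_card_Hstep_univ_iff, net.none_notMem_trace_iff,
    or_iff_right net.t_notMem_Nbr_s]

/-- for every realization `g`, `t ∈ H_∞(g, V)` (inviting everyone)
if and only if `g` is a type-1 realization, i.e. `ℵ0 ∉ t(g)`. -/
theorem friended_with_all_invited_iff_type_one (net : FriendNet V) (g : V → Option V)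
    (hg : net.IsRealization g) :
    net.t ∈ net.Hinf g Finset.univ ↔ (none : Option V) ∉ net.trace g :=
  friended_with_all_invited_iff_type_one_general net g
end

section
/- Let V be a finite set, U a finite family of subsets of V, and p ≤ |U| a positive integer. If V' ⊆ V covers (i.e., contains as subsets) a subfamily U' ⊆ U with |U'| ≥ p, then for every subfamily U'' ⊆ U' with |U''| = p, the set V'' = ⋃_{x∈U''} x covers at least p members of U and satisfies |V''| ≤ |V'|. Consequently, the minimum cardinality of a set covering at least p members of U (the Minimum Subset Cover optimum) equals the minimum of |⋃_{x∈U''} x| over all U'' ⊆ U with |U''| = p (the Minimum p-Union optimum). -/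
/-!
The union of `p` members of `U` covers those `p` members, so every Minimum p-Union value is a
Minimum Subset Cover value; conversely a set covering `p` members of `U` contains the union of `p`
of them, so every Minimum Subset Cover value dominates a Minimum p-Union value. Hence the two
infima agree, including when both sets are empty and both infima are the junk value `0`.
-/

open Finset

variable {α : Type*} [DecidableEq α]

lemma Finset.card_le_card_filter_subset_sup_id {U U'' : Finset (Finset α)} (h : U'' ⊆ U) :
    #U'' ≤ #(U.filter fun x => x ⊆ U''.sup id) :=
  card_le_card fun _ hx => mem_filter.2 ⟨h hx, le_sup (f := id) hx⟩

lemma Finset.exists_subset_card_eq_sup_id_subset {U : Finset (Finset α)} {W : Finset α} {p : ℕ}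
    (h : p ≤ #(U.filter fun x => x ⊆ W)) :
    ∃ U'' ⊆ U, #U'' = p ∧ U''.sup id ⊆ W := by
  obtain ⟨U'', hsub, hcard⟩ := exists_subset_card_eq h
  exact ⟨U'', hsub.trans (filter_subset _ _), hcard,
    Finset.sup_le fun x hx => (mem_filter.1 (hsub hx)).2⟩

theorem msc_reduces_to_mpu_general {V : Type} [DecidableEq V]
    (U : Finset (Finset V)) (p : ℕ) :
    (∀ (V' : Finset V) (U' : Finset (Finset V)), U' ⊆ U → (∀ x ∈ U', x ⊆ V') →
      p ≤ U'.card → ∀ U'' ⊆ U', U''.card = p →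
        p ≤ (U.filter fun x => x ⊆ U''.sup id).card ∧ (U''.sup id).card ≤ V'.card) ∧
    sInf {k : ℕ | ∃ W : Finset V, W.card = k ∧ p ≤ (U.filter fun x => x ⊆ W).card} =
      sInf {k : ℕ |
        ∃ U'' : Finset (Finset V), U'' ⊆ U ∧ U''.card = p ∧ (U''.sup id).card = k} := by
  refine ⟨fun V' U' hU' hcov _ U'' hU'' hcard => ⟨?_, ?_⟩, ?_⟩
  · exact hcard ▸ card_le_card_filter_subset_sup_id (hU''.trans hU')
  · exact card_le_card (Finset.sup_le fun x hx => hcov x (hU'' hx))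
  · apply csInf_eq_csInf_of_forall_exists_le
    · rintro k ⟨W, rfl, hW⟩
      obtain ⟨U'', hU'', hcard, hsup⟩ := exists_subset_card_eq_sup_id_subset hW
      exact ⟨_, ⟨U'', hU'', hcard, rfl⟩, card_le_card hsup⟩
    · rintro k ⟨U'', hU'', hcard, rfl⟩
      exact ⟨_, ⟨_, rfl, hcard ▸ card_le_card_filter_subset_sup_id hU''⟩, le_rfl⟩

/-- if `V' ⊆ V` covers a subfamily `U' ⊆ U` with `|U'| ≥ p`, then for
every `U'' ⊆ U'` with `|U''| = p`, the union `V'' = ⋃_{x ∈ U''} x` covers at least `p`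
members of `U` and `|V''| ≤ |V'|`. Consequently, the optimum of the Minimum Subset Cover
problem equals the optimum of the Minimum p-Union problem. -/
theorem msc_reduces_to_mpu {V : Type} [Fintype V] [DecidableEq V]
    (U : Finset (Finset V)) (p : ℕ) (hp : 0 < p) (hpU : p ≤ U.card) :
    (∀ (V' : Finset V) (U' : Finset (Finset V)), U' ⊆ U → (∀ x ∈ U', x ⊆ V') →
      p ≤ U'.card → ∀ U'' ⊆ U', U''.card = p →
        p ≤ (U.filter fun x => x ⊆ U''.sup id).card ∧ (U''.sup id).card ≤ V'.card) ∧
    sInf {k : ℕ | ∃ W : Finset V, W.card = k ∧ p ≤ (U.filter fun x => x ⊆ W).card} =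
      sInf {k : ℕ |
        ∃ U'' : Finset (Finset V), U'' ⊆ U ∧ U''.card = p ∧ (U''.sup id).card = k} :=
  msc_reduces_to_mpu_general U p
end

section
/- Suppose α ∈ (0,1], ε0, ε1 ∈ (0,1), and p* > 0 satisfies |p* − p_max| ≤ ε0·p_max. Let B_l = (g_1,…,g_l) be a sequence of l realizations such that |F(B_l,I)/l − f(I)| ≤ ε1·p* for every I ⊆ V, and let β = (α − ε1(1+ε0))/(1 + ε1(1+ε0)). Then every invitation set I_α ⊆ V with f(I_α) ≥ α·p_max satisfies F(B_l, I_α) ≥ β·F(B_l,V); consequently, an output I* of a (2√|B_l^1|)-approximation algorithm for the induced minimum subset cover instance with coverage requirement ⌈β·|B_l^1|⌉ satisfies |I*| ≤ 2√|B_l^1|·|I_α|. -/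
open Finset MeasureTheory

variable {V : Type} [Fintype V] [DecidableEq V]

/-!
Multiplying the sampling error bounds by `l` gives `F(B_l, I_α) ≥ l (α p_max - ε1 p*)` and
`F(B_l, V) ≤ l (p_max + ε1 p*)`; with `p* ≤ (1 + ε0) p_max` the ratio of these two bounds is
at least `β`. Since `F` is natural-valued, `F(B_l, I_α) ≥ β F(B_l, V)` also clears the ceiling,
so `I_α` meets the coverage requirement and the approximation guarantee applies to it.
-/

theorem beta_mul_le_of_estimates {α ε0 ε1 p pstar L X Y : ℝ} (hε0 : 0 ≤ ε0) (hε1 : 0 ≤ ε1)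
    (hL : 0 ≤ L) (hX : 0 ≤ X) (hY : 0 ≤ Y) (hpstar : pstar ≤ (1 + ε0) * p)
    (hXlow : L * (α * p - ε1 * pstar) ≤ X) (hYup : Y ≤ L * (p + ε1 * pstar)) :
    (α - ε1 * (1 + ε0)) / (1 + ε1 * (1 + ε0)) * Y ≤ X := by
  have hD : 0 < 1 + ε1 * (1 + ε0) := by positivity
  rcases le_or_gt (α - ε1 * (1 + ε0)) 0 with hc | hc
  · have : (α - ε1 * (1 + ε0)) / (1 + ε1 * (1 + ε0)) ≤ 0 := div_nonpos_of_nonpos_of_nonneg hc hD.le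
    exact (mul_nonpos_of_nonpos_of_nonneg this hY).trans hX
  · set β := (α - ε1 * (1 + ε0)) / (1 + ε1 * (1 + ε0))
    have hβD : β * (1 + ε1 * (1 + ε0)) = α - ε1 * (1 + ε0) := div_mul_cancel₀ _ hD.ne'
    have hβL : 0 ≤ β * L := mul_nonneg (div_nonneg hc.le hD.le) hL
    calc β * Y ≤ β * L * (p + ε1 * pstar) := by rw [mul_assoc]; gcongr
      _ ≤ β * L * (p + ε1 * ((1 + ε0) * p)) := by gcongr
      _ = L * ((α - ε1 * (1 + ε0)) * p) := by rw [← hβD]; ring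
      _ ≤ L * (α * p - ε1 * pstar) := by gcongr; linarith [mul_le_mul_of_nonneg_left hpstar hε1]
      _ ≤ X := hXlow

namespace FriendNet

variable (net : FriendNet V) {l : ℕ} (B : Fin l → V → Option V)

theorem F_eq_card (I : Finset V) :
    net.F B I = #{i | net.trace (B i) ⊆ I.image some} := by
  rw [F, ← sum_boole]
  rfl

theorem F_nonneg (I : Finset V) : 0 ≤ net.F B I := by
  rw [F_eq_card]
  positivity

theorem F_le_length (I : Finset V) : net.F B I ≤ l := by
  rw [F_eq_card]
  exact_mod_cast (card_filter_le _ _).trans (card_fin l).le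

theorem ceil_le_F_iff (x : ℝ) (I : Finset V) : (⌈x⌉ : ℝ) ≤ net.F B I ↔ x ≤ net.F B I := by
  rw [F_eq_card, ← Int.cast_natCast, Int.cast_le, Int.ceil_le]

theorem f_le_pmax (I : Finset V) : net.f I ≤ net.pmax :=
  le_ciSup (Set.finite_range _).bddAbove I

variable {net B}

theorem mul_sub_le_F_of_abs_le {I : Finset V} {δ : ℝ}
    (h : |net.F B I / l - net.f I| ≤ δ) : l * (net.f I - δ) ≤ net.F B I := by
  rcases Nat.eq_zero_or_pos l with rfl | hl
  · simpa using net.F_nonneg B I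
  · have : net.f I - δ ≤ net.F B I / l := by linarith [(abs_le.mp h).1]
    rwa [le_div_iff₀' (by exact_mod_cast hl)] at this

theorem F_le_mul_add_of_abs_le {I : Finset V} {δ : ℝ}
    (h : |net.F B I / l - net.f I| ≤ δ) : net.F B I ≤ l * (net.f I + δ) := by
  rcases Nat.eq_zero_or_pos l with rfl | hl
  · simpa using net.F_le_length B I
  · have : net.F B I / l ≤ net.f I + δ := by linarith [(abs_le.mp h).2]
    rwa [div_le_iff₀' (by exact_mod_cast hl)] at this

end FriendNet

theorem solution_size_bounded_general (net : FriendNet V)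
    (α ε0 ε1 pstar β : ℝ) {l : ℕ} (B : Fin l → V → Option V)
    (hε0 : ε0 ∈ Set.Ioo (0 : ℝ) 1) (hε1 : ε1 ∈ Set.Ioo (0 : ℝ) 1)
    (hest : |pstar - net.pmax| ≤ ε0 * net.pmax)
    (hF : ∀ I : Finset V, |net.F B I / (l : ℝ) - net.f I| ≤ ε1 * pstar)
    (hβ : β = (α - ε1 * (1 + ε0)) / (1 + ε1 * (1 + ε0))) :
    ∀ Iα : Finset V, α * net.pmax ≤ net.f Iα →
      β * net.F B Finset.univ ≤ net.F B Iα ∧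
      ∀ Istar : Finset V,
        ((⌈β * net.F B Finset.univ⌉ : ℝ) ≤ net.F B Istar ∧
          ∀ I' : Finset V, (⌈β * net.F B Finset.univ⌉ : ℝ) ≤ net.F B I' →
            (Istar.card : ℝ) ≤ 2 * Real.sqrt (net.F B Finset.univ) * (I'.card : ℝ)) →
        (Istar.card : ℝ) ≤ 2 * Real.sqrt (net.F B Finset.univ) * (Iα.card : ℝ) := by
  intro Iα hIα
  have hpstar : pstar ≤ (1 + ε0) * net.pmax := by linarith [(abs_le.mp hest).2]
  have hIαlow : l * (α * net.pmax - ε1 * pstar) ≤ net.F B Iα :=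
    le_trans (by gcongr) (FriendNet.mul_sub_le_F_of_abs_le (hF Iα))
  have hVup : net.F B univ ≤ l * (net.pmax + ε1 * pstar) :=
    (FriendNet.F_le_mul_add_of_abs_le (hF univ)).trans (by gcongr; exact net.f_le_pmax univ)
  have hcover : β * net.F B univ ≤ net.F B Iα := hβ ▸
    beta_mul_le_of_estimates hε0.1.le hε1.1.le l.cast_nonneg (net.F_nonneg B Iα)
      (net.F_nonneg B univ) hpstar hIαlow hVup
  exact ⟨hcover, fun _ ⟨_, hmin⟩ => hmin Iα ((net.ceil_le_F_iff B _ Iα).2 hcover)⟩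

/-- Lemma 7: under Equation System 1, every invitation set `I_α` with
`f(I_α) ≥ α·p_max` satisfies `F(B_l, I_α) ≥ β·F(B_l, V)`; consequently, any output `I*`
of a `(2√|B_l^1|)`-approximation algorithm for the induced minimum subset cover instance
with coverage requirement `⌈β·|B_l^1|⌉` satisfies `|I*| ≤ 2√|B_l^1|·|I_α|`
(recall `|B_l^1| = F(B_l, V)`). -/
theorem solution_size_bounded (net : FriendNet V)
    (α ε0 ε1 pstar β : ℝ) {l : ℕ} (B : Fin l → V → Option V)
    (hB : ∀ i : Fin l, net.IsRealization (B i))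
    (hα : α ∈ Set.Ioc (0 : ℝ) 1)
    (hε0 : ε0 ∈ Set.Ioo (0 : ℝ) 1) (hε1 : ε1 ∈ Set.Ioo (0 : ℝ) 1)
    (hpstar : 0 < pstar)
    (hest : |pstar - net.pmax| ≤ ε0 * net.pmax)
    (hF : ∀ I : Finset V, |net.F B I / (l : ℝ) - net.f I| ≤ ε1 * pstar)
    (hβ : β = (α - ε1 * (1 + ε0)) / (1 + ε1 * (1 + ε0))) :
    ∀ Iα : Finset V, α * net.pmax ≤ net.f Iα →
      β * net.F B Finset.univ ≤ net.F B Iα ∧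
      ∀ Istar : Finset V,
        ((⌈β * net.F B Finset.univ⌉ : ℝ) ≤ net.F B Istar ∧
          ∀ I' : Finset V, (⌈β * net.F B Finset.univ⌉ : ℝ) ≤ net.F B I' →
            (Istar.card : ℝ) ≤ 2 * Real.sqrt (net.F B Finset.univ) * (I'.card : ℝ)) →
        (Istar.card : ℝ) ≤ 2 * Real.sqrt (net.F B Finset.univ) * (Iα.card : ℝ) :=
  solution_size_bounded_general net α ε0 ε1 pstar β B hε0 hε1 hest hF hβ
end
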